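/- arXiv:1804.07546 — 3 statements merged into one kernel-verified Lean document; each statement's English description precedes it below -/
import Mathlib

section
/- For every positive integer M, every nonnegative integer k, every a, and every y ≠ 1 with y^M ≠ 1, the distribution relation β_k(a, y) = M^{k−1} · Σ_{b=0}^{M−1} y^b · β_k((a+b)/M, y^M) holds. -/
/-- The twisted Bernoulli polynomial `β_k(x,y)`, defined (for `y ≠ 1`) by the
exponential generating function `t·e^{xt}/(y·e^t − 1) = Σ_{k≥0} β_k(x,y) t^k/k!`. -/
noncomputable def twistedBernoulli {K : Type*} [Field K] [CharZero K] (k : ℕ) (x y : K) : K :=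
  (k.factorial : K) *
    PowerSeries.coeff (R := K) k
      (PowerSeries.X * PowerSeries.rescale x (PowerSeries.exp K) *
        (PowerSeries.C (R := K) y * PowerSeries.exp K - 1)⁻¹)

/-!
With `u = y e^t`, the generating function `F(a, y) = t e^{at} / (u - 1)` satisfies
`F(a, y) (u^M - 1) = t e^{at} (1 + u + ⋯ + u^{M-1}) = t Σ_b y^b e^{(a+b)t}`.
On the other hand, substituting `t ↦ M t` in `F((a+b)/M, y^M) (y^M e^t - 1) = t e^{(a+b)t/M}`
gives `F((a+b)/M, y^M)(M t) (u^M - 1) = M t e^{(a+b)t}`. Cancelling the unit `u^M - 1`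
(its constant term is `y^M - 1 ≠ 0`) yields
`M F(a, y)(t) = Σ_b y^b F((a+b)/M, y^M)(M t)`, and comparing coefficients of `t^k` is the
distribution relation.
-/

open PowerSeries Finset

namespace PowerSeries

theorem rescale_C {R : Type*} [CommSemiring R] (c d : R) : rescale c (C d) = C d := by
  ext n
  cases n <;> simp [coeff_C]

theorem rescale_natCast_add_exp {A : Type*} [CommRing A] [Algebra ℚ A] (a : A) (n : ℕ) :
    rescale (a + n) (exp A) = rescale a (exp A) * exp A ^ n := by
  rw [exp_pow_eq_rescale_exp, exp_mul_exp_eq_exp_add]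

end PowerSeries

section GeneratingFunction

variable {K : Type*} [Field K] [CharZero K]

noncomputable def twistedBernoulliGF (x y : K) : K⟦X⟧ :=
  X * rescale x (exp K) * (C y * exp K - 1)⁻¹

theorem twistedBernoulli_eq_factorial_mul_coeff (k : ℕ) (x y : K) :
    twistedBernoulli k x y = k.factorial * coeff k (twistedBernoulliGF x y) :=
  rfl

theorem twistedBernoulliGF_mul_denom (x : K) {y : K} (hy : y ≠ 1) :
    twistedBernoulliGF x y * (C y * exp K - 1) = X * rescale x (exp K) := by
  rw [twistedBernoulliGF, mul_assoc, PowerSeries.inv_mul_cancel]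
  · exact mul_one _
  · simpa [sub_eq_zero] using hy

theorem sum_C_pow_mul_rescale_exp (M : ℕ) (a y : K) :
    ∑ b ∈ range M, C (y ^ b) * rescale (a + b) (exp K)
      = rescale a (exp K) * ∑ b ∈ range M, (C y * exp K) ^ b := by
  rw [mul_sum]
  refine sum_congr rfl fun b _ => ?_
  rw [rescale_natCast_add_exp, mul_pow, map_pow]
  ring

theorem natCast_mul_twistedBernoulliGF {M : ℕ} (hM : M ≠ 0) (a : K) {y : K} (hy : y ≠ 1)
    (hyM : y ^ M ≠ 1) :
    C (M : K) * twistedBernoulliGF a y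
      = ∑ b ∈ range M, C (y ^ b) * rescale (M : K) (twistedBernoulliGF ((a + b) / M) (y ^ M)) := by
  have hMK : (M : K) ≠ 0 := Nat.cast_ne_zero.mpr hM
  set u : K⟦X⟧ := C y * exp K
  have hdenom : rescale (M : K) (C (y ^ M) * exp K - 1) = u ^ M - 1 := by
    rw [map_sub, map_mul, rescale_C, ← exp_pow_eq_rescale_exp, map_one, mul_pow, map_pow]
  have hunit : u ^ M - 1 ≠ 0 := by
    refine fun h => hyM ?_
    simpa [u, sub_eq_zero] using congrArg constantCoeff h
  have hterm (b : ℕ) :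
      rescale (M : K) (twistedBernoulliGF ((a + b) / M) (y ^ M)) * (u ^ M - 1)
        = C (M : K) * X * rescale (a + b) (exp K) := by
    rw [← hdenom, ← map_mul, twistedBernoulliGF_mul_denom _ hyM, map_mul, rescale_X,
      rescale_rescale, div_mul_cancel₀ _ hMK]
  refine mul_right_cancel₀ hunit ?_
  calc C (M : K) * twistedBernoulliGF a y * (u ^ M - 1)
      = C (M : K) * (twistedBernoulliGF a y * (u - 1)) * ∑ b ∈ range M, u ^ b := by
        rw [← geom_sum_mul]; ring
    _ = C (M : K) * X * ∑ b ∈ range M, C (y ^ b) * rescale (a + b) (exp K) := by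
        rw [twistedBernoulliGF_mul_denom _ hy, sum_C_pow_mul_rescale_exp]; ring
    _ = _ := by
        rw [sum_mul, mul_sum]
        refine sum_congr rfl fun b _ => ?_
        rw [mul_assoc (C (y ^ b)), hterm]
        ring

end GeneratingFunction

theorem twistedBernoulli_distribution_relation {K : Type*} [Field K] [CharZero K]
    (M : ℕ) (hM : 1 ≤ M) (k : ℕ) (a y : K) (hy : y ≠ 1) (hyM : y ^ M ≠ 1) :
    twistedBernoulli k a y =
      (M : K) ^ ((k : ℤ) - 1) *
        ∑ b ∈ Finset.range M, y ^ b * twistedBernoulli k ((a + (b : K)) / (M : K)) (y ^ M) := by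
  have hM0 : M ≠ 0 := by omega
  have hMK : (M : K) ≠ 0 := Nat.cast_ne_zero.mpr hM0
  have hcoeff := congrArg (coeff k) (natCast_mul_twistedBernoulliGF hM0 a hy hyM)
  simp only [coeff_C_mul, map_sum, coeff_rescale] at hcoeff
  rw [twistedBernoulli_eq_factorial_mul_coeff, zpow_sub₀ hMK, zpow_natCast, zpow_one]
  calc (k.factorial : K) * coeff k (twistedBernoulliGF a y)
      = k.factorial / M * (M * coeff k (twistedBernoulliGF a y)) := by field_simp
    _ = _ := by
        rw [hcoeff, mul_sum, mul_sum]
        refine sum_congr rfl fun b _ => ?_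
        rw [twistedBernoulli_eq_factorial_mul_coeff]
        ring
end

section
/- With f_i(y) defined by the recurrence f_1(y) = h/(y−1) and f_i(y) = (−y/(y−1)) · Σ_{j=1}^{i−1} f_j(y) C(k−j, i−j) for i ≥ 2, each f_i(y) has the form φ_i(y)/(y−1)^i where φ_i ∈ ℚ[y] is a polynomial of degree at most i−1 with φ_i(0) = 0 for i ≥ 2 and φ_1(0) = h; moreover if h ∈ ℤ then φ_i ∈ ℤ[y]. -/
/-!
Clearing denominators in the recurrence gives the numerators explicitly:
`φ₁ = h` and `φᵢ = -y ∑_{j<i} C(k-j, i-j) φⱼ (y-1)^(i-1-j)`.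
This recursion makes sense over any commutative ring and commutes with ring homomorphisms, so
for `h ∈ ℤ` it can be run over `ℤ`; the factor `-y` gives `φᵢ(0) = 0` for `i ≥ 2`, and the
degree bound follows by induction.
-/

open Polynomial

noncomputable def numeratorPoly {R : Type*} [CommRing R] (k : ℕ) (h : R) : ℕ → R[X]
  | 0 => 0
  | 1 => C h
  | i + 2 => -X * ∑ j ∈ (Finset.Icc 1 (i + 1)).attach,
      ((k - j).choose (i + 2 - j) : R[X]) * numeratorPoly k h j * (X - 1) ^ (i + 1 - j)
decreasing_by have := (Finset.mem_Icc.1 j.2).2; omega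

section
variable {R : Type*} [CommRing R] (k : ℕ) (h : R)

theorem numeratorPoly_one : numeratorPoly k h 1 = C h := by
  rw [numeratorPoly]

theorem numeratorPoly_add_two (i : ℕ) :
    numeratorPoly k h (i + 2) = -X * ∑ j ∈ Finset.Icc 1 (i + 1),
      ((k - j).choose (i + 2 - j) : R[X]) * numeratorPoly k h j * (X - 1) ^ (i + 1 - j) := by
  rw [numeratorPoly, Finset.sum_attach (Finset.Icc 1 (i + 1))
    (fun j => ((k - j).choose (i + 2 - j) : R[X]) * numeratorPoly k h j * (X - 1) ^ (i + 1 - j))]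

theorem eval_zero_numeratorPoly_add_two (i : ℕ) : (numeratorPoly k h (i + 2)).eval 0 = 0 := by
  simp [numeratorPoly_add_two]

theorem natDegree_numeratorPoly_le (i : ℕ) : (numeratorPoly k h i).natDegree ≤ i - 1 := by
  induction i using Nat.strong_induction_on with
  | _ i ih =>
    match i with
    | 0 => simp [numeratorPoly]
    | 1 => simp [numeratorPoly_one]
    | i + 2 =>
      rw [numeratorPoly_add_two]
      refine (natDegree_mul_le_of_le (natDegree_neg_le_of_le natDegree_X_le)
        (natDegree_sum_le_of_forall_le _ _ (n := i) fun j hj => ?_)).trans (by omega)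
      obtain ⟨hj1, hji⟩ := Finset.mem_Icc.1 hj
      have hX1 : (X - 1 : R[X]).natDegree ≤ 1 := by simpa using natDegree_X_sub_C_le (1 : R)
      refine natDegree_mul_le_of_le (natDegree_mul_le_of_le (natDegree_natCast _).le
        (ih j (by omega))) (natDegree_pow_le_of_le _ hX1) |>.trans ?_
      omega

theorem map_numeratorPoly {S : Type*} [CommRing S] (f : R →+* S) (i : ℕ) :
    (numeratorPoly k h i).map f = numeratorPoly k (f h) i := by
  induction i using Nat.strong_induction_on with
  | _ i ih =>
    match i with
    | 0 => simp [numeratorPoly]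
    | 1 => simp [numeratorPoly_one]
    | i + 2 =>
      simp only [numeratorPoly_add_two, Polynomial.map_mul, Polynomial.map_neg, map_X,
        Polynomial.map_sum, Polynomial.map_pow, Polynomial.map_sub, Polynomial.map_one,
        Polynomial.map_natCast]
      refine congrArg _ (Finset.sum_congr rfl fun j hj => ?_)
      rw [ih j (by grind)]

end

theorem eq_numeratorPoly_div_pow {K : Type*} [Field K] (k : ℕ) (h : K) (f : ℕ → RatFunc K)
    (hf1 : f 1 = algebraMap K (RatFunc K) h / (RatFunc.X - 1))
    (hrec : ∀ i : ℕ, 2 ≤ i →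
      f i = (-RatFunc.X / (RatFunc.X - 1)) *
        ∑ j ∈ Finset.Icc 1 (i - 1), f j * ((k - j).choose (i - j) : RatFunc K))
    (i : ℕ) (hi : 1 ≤ i) :
    f i = algebraMap K[X] (RatFunc K) (numeratorPoly k h i) / (RatFunc.X - 1) ^ i := by
  have hX1 : (RatFunc.X - 1 : RatFunc K) ≠ 0 := by
    simpa [← RatFunc.algebraMap_X] using RatFunc.algebraMap_ne_zero (X_sub_C_ne_zero (1 : K))
  induction i using Nat.strong_induction_on with
  | _ i ih =>
    match i with
    | 1 => simp [hf1, numeratorPoly_one]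
    | i + 2 =>
      have hsum : ∑ j ∈ Finset.Icc 1 (i + 1), f j * ((k - j).choose (i + 2 - j) : RatFunc K) =
          (∑ j ∈ Finset.Icc 1 (i + 1), ((k - j).choose (i + 2 - j) : RatFunc K) *
            algebraMap K[X] (RatFunc K) (numeratorPoly k h j) * (RatFunc.X - 1) ^ (i + 1 - j)) /
            (RatFunc.X - 1) ^ (i + 1) := by
        rw [Finset.sum_div]
        refine Finset.sum_congr rfl fun j hj => ?_
        obtain ⟨hj1, hji⟩ := Finset.mem_Icc.1 hj
        rw [ih j (by omega) hj1, pow_sub₀ _ hX1 hji]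
        field_simp
      rw [hrec (i + 2) (by omega), show i + 2 - 1 = i + 1 by omega, hsum, numeratorPoly_add_two]
      simp only [map_mul, map_neg, map_sum, map_pow, map_sub, map_one, map_natCast,
        RatFunc.algebraMap_X]
      field_simp
      ring

theorem coefficients_shape_general
    (k : ℕ) (h : ℚ) (f' : ℕ → RatFunc ℚ)
    (hf1 : f' 1 = algebraMap ℚ (RatFunc ℚ) h / (RatFunc.X - 1))
    (hrec : ∀ i : ℕ, 2 ≤ i →
      f' i = (-RatFunc.X / (RatFunc.X - 1)) *
        ∑ j ∈ Finset.Icc 1 (i - 1), f' j * ((k - j).choose (i - j) : RatFunc ℚ)) :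
    ∀ i : ℕ, 1 ≤ i → i ≤ k →
      ∃ φ : Polynomial ℚ,
        f' i = algebraMap (Polynomial ℚ) (RatFunc ℚ) φ / (RatFunc.X - 1) ^ i ∧
        φ.degree ≤ (i - 1 : ℕ) ∧
        (2 ≤ i → φ.eval 0 = 0) ∧
        (i = 1 → φ.eval 0 = h) ∧
        ((∃ m : ℤ, h = (m : ℚ)) → ∀ n : ℕ, ∃ a : ℤ, φ.coeff n = (a : ℚ)) := by
  intro i hi _
  -- `simpa` reconciles the two (propositionally equal) `ℚ`-algebra structures on `RatFunc ℚ`.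
  refine ⟨numeratorPoly k h i, eq_numeratorPoly_div_pow k h f' (by simpa using hf1) hrec i hi,
    degree_le_of_natDegree_le (natDegree_numeratorPoly_le k h i), fun hi2 => ?_,
    fun hi1 => by simp [hi1, numeratorPoly_one], ?_⟩
  · obtain ⟨n, rfl⟩ := Nat.exists_eq_add_of_le' hi2
    exact eval_zero_numeratorPoly_add_two k h n
  · rintro ⟨m, rfl⟩ n
    exact ⟨(numeratorPoly k m i).coeff n, by
      rw [← eq_intCast (Int.castRingHom ℚ) m, ← map_numeratorPoly, coeff_map, eq_intCast]⟩

/-- With `f_i(y)` defined by `f_1(y) = h/(y−1)` and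
`f_i(y) = (−y/(y−1)) Σ_{j=1}^{i−1} f_j(y) C(k−j, i−j)` for `i ≥ 2`, each `f_i(y)` has the
form `φ_i(y)/(y−1)^i` with `φ_i ∈ ℚ[y]` of degree at most `i−1`, `φ_i(0) = 0` for `i ≥ 2`,
`φ_1(0) = h`, and `φ_i ∈ ℤ[y]` whenever `h ∈ ℤ`. -/
theorem coefficients_shape
    (k : ℕ) (hk : 1 ≤ k) (h : ℚ) (f' : ℕ → RatFunc ℚ)
    (hf1 : f' 1 = algebraMap ℚ (RatFunc ℚ) h / (RatFunc.X - 1))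
    (hrec : ∀ i : ℕ, 2 ≤ i →
      f' i = (-RatFunc.X / (RatFunc.X - 1)) *
        ∑ j ∈ Finset.Icc 1 (i - 1), f' j * ((k - j).choose (i - j) : RatFunc ℚ)) :
    ∀ i : ℕ, 1 ≤ i → i ≤ k →
      ∃ φ : Polynomial ℚ,
        f' i = algebraMap (Polynomial ℚ) (RatFunc ℚ) φ / (RatFunc.X - 1) ^ i ∧
        φ.degree ≤ (i - 1 : ℕ) ∧
        (2 ≤ i → φ.eval 0 = 0) ∧
        (i = 1 → φ.eval 0 = h) ∧
        ((∃ m : ℤ, h = (m : ℚ)) → ∀ n : ℕ, ∃ a : ℤ, φ.coeff n = (a : ℚ)) :=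
  coefficients_shape_general k h f' hf1 hrec
end

section
/- Let p be a prime, k ≥ 1, and z ∈ ℂ_p with |z−1|_p ≥ 1. Then for all N ≥ 0 and 0 ≤ a ≤ p^N − 1, the twisted Bernoulli measure value satisfies |p^{N(k−1)} z^a β_k(a/p^N, z^{p^N})|_p ≤ 1. -/
open PowerSeries Finset
open scoped Nat

/-!
Write `β_k(x, y) = ∑ C(k, j) β_j(y) x^(k-j)`. Since `β_0 = 0`, the factor `p^(N(k-1))` clears
the denominator of every power of `x = a/p^N` that occurs. Comparing coefficients in
`(y e^t - 1) · t/(y e^t - 1) = t` gives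
`(y - 1) β_n(y) = [n = 1] - y ∑_{j<n} C(n, j) β_j(y)`,
so `|β_n(y)| ≤ |y - 1|⁻¹` by induction as soon as `|y - 1| ≥ 1` (then `|y| ≤ |y - 1|`).
Finally for `y = z^(p^N)` we have `|y - 1| = max(1, |z|)^(p^N) ≥ |z|^a`: when `|z| ≤ 1` this is
because the binomial coefficients `C(p^N, m)`, `0 < m < p^N`, are divisible by `p`.
-/

section TwistedBernoulliNumber

variable {K : Type*} [Field K] [CharZero K]

theorem factorial_mul_coeff_rescale_exp_mul (x : K) (f : K⟦X⟧) (n : ℕ) :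
    (n ! : K) * coeff n (rescale x (exp K) * f) =
      ∑ j ∈ range (n + 1), (n.choose j : K) * x ^ (n - j) * ((j ! : K) * coeff j f) := by
  rw [mul_comm (rescale x _), coeff_mul,
    Nat.sum_antidiagonal_eq_sum_range_succ (fun j i => coeff j f * coeff i (rescale x (exp K))),
    mul_sum]
  refine sum_congr rfl fun j hj => ?_
  rw [coeff_rescale, coeff_exp,
    ← Nat.choose_mul_factorial_mul_factorial (Nat.lt_succ_iff.mp (mem_range.mp hj))]
  have : ((n - j)! : K) ≠ 0 := Nat.cast_ne_zero.mpr (Nat.factorial_ne_zero _)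
  push_cast
  field_simp

noncomputable def twistedBernoulliNumber (n : ℕ) (y : K) : K :=
  n ! * coeff n (X * (C y * exp K - 1)⁻¹)

theorem twistedBernoulliNumber_zero (y : K) : twistedBernoulliNumber 0 y = 0 := by
  simp [twistedBernoulliNumber]

theorem twistedBernoulli_eq_sum (k : ℕ) (x y : K) :
    twistedBernoulli k x y =
      ∑ j ∈ range (k + 1), (k.choose j : K) * x ^ (k - j) * twistedBernoulliNumber j y := by
  rw [twistedBernoulli, mul_comm X, mul_assoc]
  exact factorial_mul_coeff_rescale_exp_mul x _ k

theorem sub_one_mul_twistedBernoulliNumber {y : K} (hy : y ≠ 1) (n : ℕ) :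
    (y - 1) * twistedBernoulliNumber n y =
      (if n = 1 then 1 else 0) -
        y * ∑ j ∈ range n, (n.choose j : K) * twistedBernoulliNumber j y := by
  set B := X * (C y * exp K - 1)⁻¹
  have hB : C y * (exp K * B) - B = X := by
    rw [← mul_assoc, ← sub_one_mul, mul_left_comm,
      PowerSeries.mul_inv_cancel _ (by simpa [sub_eq_zero] using hy), mul_one]
  have hexp := factorial_mul_coeff_rescale_exp_mul (1 : K) B n
  rw [rescale_one, RingHom.id_apply] at hexp
  have hX : (n ! : K) * coeff n X = if n = 1 then 1 else 0 := by
    rw [coeff_X]; split_ifs with h <;> simp [h]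
  have hcoeff := congrArg (fun f => (n ! : K) * coeff n f) hB
  simp only [map_sub, coeff_C_mul, mul_sub, mul_left_comm _ y, hexp, one_pow, mul_one,
    sum_range_succ, Nat.choose_self, Nat.cast_one, hX] at hcoeff
  simp only [twistedBernoulliNumber]
  linear_combination hcoeff

end TwistedBernoulliNumber

section Ultrametric

variable {K : Type*} [NormedField K] [IsUltrametricDist K]

theorem norm_le_norm_sub_one {y : K} (hy : 1 ≤ ‖y - 1‖) : ‖y‖ ≤ ‖y - 1‖ := by
  simpa [max_eq_left hy] using IsUltrametricDist.norm_add_one_le_max_norm_one (y - 1)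

theorem norm_natCast_le_of_dvd {p n : ℕ} (h : p ∣ n) : ‖(n : K)‖ ≤ ‖(p : K)‖ := by
  obtain ⟨c, rfl⟩ := h
  rw [Nat.cast_mul, norm_mul]
  exact mul_le_of_le_one_right (norm_nonneg _) (IsUltrametricDist.norm_natCast_le_one K c)

theorem norm_pow_prime_pow_sub_one_of_norm_le_one {p : ℕ} (hp : p.Prime) (hp1 : ‖(p : K)‖ < 1)
    {z : K} (hz1 : ‖z‖ ≤ 1) (hz : 1 ≤ ‖z - 1‖) (N : ℕ) : ‖z ^ p ^ N - 1‖ = 1 := by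
  set P := p ^ N
  have hP : 1 ≤ P := Nat.one_le_pow _ _ hp.pos
  have hw : ‖z - 1‖ = 1 := by
    refine le_antisymm ?_ hz
    simpa [sub_eq_add_neg, max_eq_right hz1] using IsUltrametricDist.norm_add_le_max z (-1)
  set w := z - 1
  set S := ∑ m ∈ range (P - 1), w ^ (m + 1) * (P.choose (m + 1) : K)
  have hbinom : z ^ P - 1 = w ^ P + S := by
    rw [show z = w + 1 by ring, add_pow, show P + 1 = P - 1 + 1 + 1 by omega, sum_range_succ,
      sum_range_succ', show P - 1 + 1 = P by omega]
    simp only [one_pow, mul_one, Nat.choose_self, Nat.choose_zero_right, Nat.cast_one, pow_zero]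
    ring
  have hS : ‖S‖ < 1 := by
    refine lt_of_le_of_lt ?_ hp1
    refine IsUltrametricDist.norm_sum_le_of_forall_le_of_nonneg (norm_nonneg _) fun m hm => ?_
    rw [norm_mul, norm_pow, hw, one_pow, one_mul]
    exact norm_natCast_le_of_dvd (hp.dvd_choose_pow m.succ_ne_zero (by simp at hm; omega))
  rw [hbinom, IsUltrametricDist.norm_add_eq_max_of_norm_ne_norm
    (by rw [norm_pow, hw, one_pow]; exact hS.ne'), norm_pow, hw, one_pow, max_eq_left hS.le]

theorem norm_pow_prime_pow_sub_one {p : ℕ} (hp : p.Prime) (hp1 : ‖(p : K)‖ < 1) {z : K}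
    (hz : 1 ≤ ‖z - 1‖) (N : ℕ) : ‖z ^ p ^ N - 1‖ = max 1 ‖z‖ ^ p ^ N := by
  rcases le_or_gt ‖z‖ 1 with hz1 | hz1
  · rw [max_eq_left hz1, one_pow, norm_pow_prime_pow_sub_one_of_norm_le_one hp hp1 hz1 hz]
  · have hzP : 1 < ‖z ^ p ^ N‖ := by
      rw [norm_pow]; exact one_lt_pow₀ hz1 (pow_ne_zero _ hp.ne_zero)
    rw [max_eq_right hz1.le, ← norm_pow, sub_eq_add_neg,
      IsUltrametricDist.norm_add_eq_max_of_norm_ne_norm (by rw [norm_neg, norm_one]; exact hzP.ne'),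
      norm_neg, norm_one, max_eq_left hzP.le]

theorem norm_pow_le_norm_pow_prime_pow_sub_one {p : ℕ} (hp : p.Prime) (hp1 : ‖(p : K)‖ < 1)
    {z : K} (hz : 1 ≤ ‖z - 1‖) {a N : ℕ} (ha : a ≤ p ^ N) : ‖z ^ a‖ ≤ ‖z ^ p ^ N - 1‖ := by
  rw [norm_pow_prime_pow_sub_one hp hp1 hz, norm_pow]
  calc ‖z‖ ^ a ≤ max 1 ‖z‖ ^ a := pow_le_pow_left₀ (norm_nonneg z) (le_max_right _ _) a
    _ ≤ max 1 ‖z‖ ^ p ^ N := pow_le_pow_right₀ (le_max_left _ _) ha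

variable [CharZero K]

theorem norm_twistedBernoulliNumber_le {y : K} (hy : 1 ≤ ‖y - 1‖) (n : ℕ) :
    ‖twistedBernoulliNumber n y‖ ≤ ‖y - 1‖⁻¹ := by
  have hy0 : 0 < ‖y - 1‖ := one_pos.trans_le hy
  induction n using Nat.strong_induction_on with
  | _ n ih =>
    have hsum :
        ‖∑ j ∈ range n, (n.choose j : K) * twistedBernoulliNumber j y‖ ≤ ‖y - 1‖⁻¹ := by
      refine IsUltrametricDist.norm_sum_le_of_forall_le_of_nonneg (by positivity) fun j hj => ?_
      rw [norm_mul]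
      exact (mul_le_of_le_one_left (norm_nonneg _)
        (IsUltrametricDist.norm_natCast_le_one K _)).trans (ih j (mem_range.mp hj))
    have hmul : ‖y - 1‖ * ‖twistedBernoulliNumber n y‖ ≤ 1 := by
      rw [← norm_mul, sub_one_mul_twistedBernoulliNumber (sub_ne_zero.mp (norm_pos_iff.mp hy0)),
        sub_eq_add_neg]
      refine (IsUltrametricDist.norm_add_le_max _ _).trans (max_le ?_ ?_)
      · split_ifs <;> simp
      · rw [norm_neg, norm_mul]
        calc _ ≤ ‖y - 1‖ * ‖y - 1‖⁻¹ :=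
              mul_le_mul (norm_le_norm_sub_one hy) hsum (norm_nonneg _) hy0.le
          _ = 1 := mul_inv_cancel₀ hy0.ne'
    rwa [← one_div, le_div_iff₀ hy0, mul_comm]

end Ultrametric

theorem twistedBernoulli_measure_bounded_general
    {K : Type*} [NormedField K] [IsUltrametricDist K] [CharZero K]
    (p : ℕ) (hp : p.Prime) (hnorm : ‖(p : K)‖ = (p : ℝ)⁻¹)
    (k : ℕ) (z : K) (hz : 1 ≤ ‖z - 1‖)
    (N a : ℕ) (ha : a ≤ p ^ N - 1) :
    ‖(p : K) ^ (N * (k - 1)) * z ^ a *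
        twistedBernoulli k ((a : K) / (p : K) ^ N) (z ^ (p ^ N))‖ ≤ 1 := by
  have hp1 : ‖(p : K)‖ < 1 := hnorm ▸ inv_lt_one_of_one_lt₀ (by exact_mod_cast hp.one_lt)
  have hza : ‖z ^ a‖ ≤ ‖z ^ p ^ N - 1‖ := norm_pow_le_norm_pow_prime_pow_sub_one hp hp1 hz
    (by have := Nat.one_le_pow N p hp.pos; omega)
  have hy1 : 1 ≤ ‖z ^ p ^ N - 1‖ := by
    simpa using norm_pow_le_norm_pow_prime_pow_sub_one hp hp1 hz (Nat.zero_le (p ^ N))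
  rw [twistedBernoulli_eq_sum, mul_sum]
  refine IsUltrametricDist.norm_sum_le_of_forall_le_of_nonneg zero_le_one fun j hj => ?_
  rcases j with _ | j
  · simp [twistedBernoulliNumber_zero]
  obtain ⟨l, rfl⟩ := Nat.exists_eq_add_of_le (Nat.lt_succ_iff.mp (mem_range.mp hj))
  have hpN : (p : K) ^ N ≠ 0 := pow_ne_zero _ (Nat.cast_ne_zero.mpr hp.ne_zero)
  have hterm : (p : K) ^ (N * (j + 1 + l - 1)) * z ^ a * ((j + 1 + l).choose (j + 1) *
        ((a : K) / (p : K) ^ N) ^ (j + 1 + l - (j + 1)) *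
          twistedBernoulliNumber (j + 1) (z ^ p ^ N))
      = (((j + 1 + l).choose (j + 1) * (p ^ N) ^ j * a ^ l : ℕ) : K) *
          (z ^ a * twistedBernoulliNumber (j + 1) (z ^ p ^ N)) := by
    simp only [Nat.add_sub_cancel_left, show j + 1 + l - 1 = j + l by omega, mul_add, pow_add,
      pow_mul, div_pow]
    push_cast
    field_simp
  rw [hterm, norm_mul, norm_mul]
  calc _ ≤ 1 * (‖z ^ p ^ N - 1‖ * ‖z ^ p ^ N - 1‖⁻¹) :=
        mul_le_mul (IsUltrametricDist.norm_natCast_le_one K _)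
          (mul_le_mul hza (norm_twistedBernoulliNumber_le hy1 _) (norm_nonneg _) (by positivity))
          (by positivity) zero_le_one
    _ = 1 := by rw [one_mul, mul_inv_cancel₀ (by positivity)]

/-- The values of the twisted Bernoulli measure are bounded by 1: for `z` in a `ℂ_p`-like
field with `|z−1| ≥ 1`, `k ≥ 1`, `N ≥ 0` and `0 ≤ a ≤ p^N − 1`,
`|p^{N(k−1)} z^a β_k(a/p^N, z^{p^N})| ≤ 1`. -/
theorem twistedBernoulli_measure_bounded
    {K : Type*} [NormedField K] [IsUltrametricDist K] [CharZero K]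
    (p : ℕ) (hp : p.Prime) (hnorm : ‖(p : K)‖ = (p : ℝ)⁻¹)
    (k : ℕ) (hk : 1 ≤ k) (z : K) (hz : 1 ≤ ‖z - 1‖)
    (N a : ℕ) (ha : a ≤ p ^ N - 1) :
    ‖(p : K) ^ (N * (k - 1)) * z ^ a *
        twistedBernoulli k ((a : K) / (p : K) ^ N) (z ^ (p ^ N))‖ ≤ 1 :=
  twistedBernoulli_measure_bounded_general p hp hnorm k z hz N a ha
end
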